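/- arXiv:1006.1408 — 6 statements merged into one kernel-verified Lean document; each statement's English description precedes it below -/
import Mathlib

section
/- The SU-automaton is non-confluent: for any infinite word w over Σ and any two infinite runs β, β' of w through the SU-automaton, if β_t = β'_t for some time t, then β_j = β'_j for all j ≤ t. -/
/-- Transition relation of the SU-automaton (the standard-translation automaton
for a strong-until formula) over alphabet `A`, with propositional formulas
`ψ φ : A → Bool`: `(s, σ, s') ∈ R` iff `s = 1 ↔ (ψ σ ∨ (φ σ ∧ s' = 1))`.
Both states are initial. -/
def suR {A : Type} (ψ φ : A → Bool) (s : Fin 2) (σ : A) (s' : Fin 2) : Prop :=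
  s = 1 ↔ (ψ σ = true ∨ (φ σ = true ∧ s' = 1))

/-- `β` is an (infinite) run of the word `w` through the SU-automaton. -/
def IsSuRun {A : Type} (ψ φ : A → Bool) (w : ℕ → A) (β : ℕ → Fin 2) : Prop :=
  ∀ t, suR ψ φ (β t) (w t) (β (t + 1))

lemma su_back {A : Type} (ψ φ : A → Bool) (w : ℕ → A) (β β' : ℕ → Fin 2)
    (hβ : IsSuRun ψ φ w β) (hβ' : IsSuRun ψ φ w β')
    (j : ℕ) (h : β (j + 1) = β' (j + 1)) : β j = β' j := by
  have h1 := hβ j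
  have h2 := hβ' j
  unfold suR at h1 h2
  rw [h] at h1
  have : β j = 1 ↔ β' j = 1 := h1.trans h2.symm
  have e1 := Fin.exists_fin_two.mp ⟨β j, rfl⟩
  omega

/-- the SU-automaton is non-confluent: two runs of the same word
that meet at time `t` agree on the whole prefix up to `t`. -/
theorem suAutomaton_nonConfluent {A : Type} (ψ φ : A → Bool)
    (w : ℕ → A) (β β' : ℕ → Fin 2)
    (hβ : IsSuRun ψ φ w β) (hβ' : IsSuRun ψ φ w β')
    (t : ℕ) (h : β t = β' t) :
    ∀ j, j ≤ t → β j = β' j := by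
  induction t with
  | zero => intro j hj; rw [Nat.le_zero.mp hj]; exact h
  | succ n ih =>
    intro j hj
    have hn : β n = β' n := su_back ψ φ w β β' hβ hβ' n h
    rcases Nat.lt_or_ge j (n+1) with hl | hg
    · exact ih hn j (Nat.lt_succ_iff.mp hl)
    · have : j = n + 1 := le_antisymm hj hg
      rw [this]; exact h
end

section
/- If an infinite word w over Σ has infinitely many positions t at which ¬(φ(w_t) = true ∧ ψ(w_t) = false) holds (i.e., infinitely many positions satisfying ¬φ ∨ ψ), then w has exactly one infinite run through the SU-automaton. -/
/-- The strong-until predicate: a witness `s ≥ t` with `ψ` at `s` and `φ` in between. -/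
def suU {A : Type} (ψ φ : A → Bool) (w : ℕ → A) (t : ℕ) : Prop :=
  ∃ s, t ≤ s ∧ ψ (w s) = true ∧ ∀ u, t ≤ u → u < s → φ (w u) = true

lemma suU_iff {A : Type} (ψ φ : A → Bool) (w : ℕ → A) (t : ℕ) :
    suU ψ φ w t ↔ (ψ (w t) = true ∨ (φ (w t) = true ∧ suU ψ φ w (t + 1))) := by
  constructor
  · rintro ⟨s, hts, hψ, hφ⟩
    rcases eq_or_lt_of_le hts with rfl | hlt
    · exact Or.inl hψ
    · refine Or.inr ⟨hφ t le_rfl hlt, s, hlt, hψ, fun u hu hu' => hφ u (by omega) hu'⟩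
  · rintro (hψ | ⟨hφt, s, hts, hψ, hφ⟩)
    · exact ⟨t, le_rfl, hψ, fun u hu hu' => absurd hu' (by omega)⟩
    · refine ⟨s, by omega, hψ, fun u hu hu' => ?_⟩
      rcases eq_or_lt_of_le hu with rfl | h'
      · exact hφt
      · exact hφ u (by omega) hu'

lemma run_one_of_suU {A : Type} {ψ φ : A → Bool} {w : ℕ → A} {β : ℕ → Fin 2}
    (hβ : IsSuRun ψ φ w β) {t : ℕ} (hU : suU ψ φ w t) : β t = 1 := by
  obtain ⟨s, hts, hψ, hφ⟩ := hU
  obtain ⟨n, rfl⟩ := Nat.exists_eq_add_of_le hts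
  clear hts
  induction n generalizing t with
  | zero => exact (hβ t).mpr (Or.inl hψ)
  | succ n ih =>
    refine (hβ t).mpr (Or.inr ⟨hφ t le_rfl (by omega), ?_⟩)
    have : t + 1 + n = t + (n + 1) := by omega
    exact ih (this ▸ hψ) (fun u hu hu' => hφ u (by omega) (by omega))

lemma suU_of_run_one {A : Type} {ψ φ : A → Bool} {w : ℕ → A} {β : ℕ → Fin 2}
    (h : ∀ t, ∃ s, t ≤ s ∧ ¬(φ (w s) = true ∧ ψ (w s) = false))
    (hβ : IsSuRun ψ φ w β) {t : ℕ} (h1 : β t = 1) : suU ψ φ w t := by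
  by_contra hU
  have key : ∀ k, β (t + k) = 1 ∧ ¬ suU ψ φ w (t + k) ∧
      φ (w (t + k)) = true ∧ ψ (w (t + k)) = false := by
    intro k
    induction k with
    | zero =>
      refine ⟨h1, hU, ?_⟩
      rcases (hβ t).mp h1 with hψ | ⟨hφt, _⟩
      · exact absurd ((suU_iff ψ φ w t).mpr (Or.inl hψ)) hU
      · refine ⟨hφt, ?_⟩
        by_contra hψ
        exact hU ((suU_iff ψ φ w t).mpr (Or.inl (by simpa using hψ)))
    | succ k ih =>
      obtain ⟨hb, hUk, hφk, hψk⟩ := ih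
      rcases (hβ (t + k)).mp hb with hψ | ⟨_, hb'⟩
      · rw [hψ] at hψk; exact absurd hψk (by simp)
      have hU' : ¬ suU ψ φ w (t + k + 1) := fun hu =>
        hUk ((suU_iff ψ φ w (t + k)).mpr (Or.inr ⟨hφk, hu⟩))
      have hb'' : β (t + (k + 1)) = 1 := by
        have : t + (k + 1) = t + k + 1 := by omega
        rw [this]; exact hb'
      refine ⟨hb'', by rw [show t + (k + 1) = t + k + 1 by omega]; exact hU', ?_⟩
      rcases (hβ (t + (k + 1))).mp hb'' with hψ | ⟨hφt, _⟩
      · exact absurd ((suU_iff ψ φ w (t + (k + 1))).mpr (Or.inl hψ))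
          (by rw [show t + (k + 1) = t + k + 1 by omega]; exact hU')
      · refine ⟨hφt, ?_⟩
        by_contra hψ
        exact (by rw [show t + (k + 1) = t + k + 1 by omega]; exact hU' : ¬ _)
          ((suU_iff ψ φ w (t + (k + 1))).mpr (Or.inl (by simpa using hψ)))
  obtain ⟨s, hts, hs⟩ := h t
  obtain ⟨k, rfl⟩ := Nat.exists_eq_add_of_le hts
  obtain ⟨_, _, hφk, hψk⟩ := key k
  exact hs ⟨hφk, hψk⟩

/-- if a word has infinitely many positions satisfying `¬φ ∨ ψ`,
then it has exactly one infinite run through the SU-automaton. -/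
theorem suAutomaton_unique_run {A : Type} (ψ φ : A → Bool) (w : ℕ → A)
    (h : ∀ t, ∃ s, t ≤ s ∧ ¬(φ (w s) = true ∧ ψ (w s) = false)) :
    ∃! β : ℕ → Fin 2, IsSuRun ψ φ w β := by
  classical
  set β : ℕ → Fin 2 := fun t => if suU ψ φ w t then 1 else 0 with hβdef
  have hβ1 : ∀ t, β t = 1 ↔ suU ψ φ w t := by
    intro t
    by_cases hU : suU ψ φ w t <;> simp [hβdef, hU]
  have hrun : IsSuRun ψ φ w β := by
    intro t
    unfold suR
    rw [hβ1 t, hβ1 (t + 1), suU_iff]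
  refine ⟨β, hrun, fun β' hβ' => ?_⟩
  funext t
  have h2 : β' t = 1 ↔ suU ψ φ w t :=
    ⟨fun h1 => suU_of_run_one h hβ' h1, fun hU => run_one_of_suU hβ' hU⟩
  have := (h2.trans (hβ1 t).symm)
  rcases Fin.exists_fin_two.mp ⟨β' t, rfl⟩ with h0 | h1
  · rcases Fin.exists_fin_two.mp ⟨β t, rfl⟩ with g0 | g1
    · rw [h0, g0]
    · exact absurd (this.mpr g1) (by rw [h0]; decide)
  · rw [h1, this.mp h1]
end

section
/- If an infinite word w over Σ satisfies φ(w_t) = true and ψ(w_t) = false for all t from some point T on and only finitely many positions satisfy ¬φ ∨ ψ, then w has exactly two infinite runs β¹ and β² through the SU-automaton, and there exists T' ∈ ℕ such that β¹_j = β²_j for all j < T', while β¹_t = 1 and β²_t = 0 for all t ≥ T' (i.e., the runs are of the form ξ·1^ω and ξ·0^ω with the same finite prefix ξ). -/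
/-!
The transition relation determines the current state as a monotone function of the
letter and the next state, and on a letter satisfying `φ ∧ ¬ψ` that function is the
identity. Hence a run is computed backwards from its state at the time `T` after which
every letter satisfies `φ ∧ ¬ψ`, where it stays constant: there is exactly one run for
each of the two choices of that state. By monotonicity the run ending in `0` lies below
the one ending in `1`, and by backward determinism, once they agree they agree at all
earlier times.
-/

section BackwardOrbit

variable {α : Type*} {f : ℕ → α → α} {x y : ℕ → α} {T : ℕ}

def IsBackwardOrbit (f : ℕ → α → α) (x : ℕ → α) : Prop :=
  ∀ t, x t = f t (x (t + 1))

def backwardSeq (f : ℕ → α → α) (T : ℕ) (c : α) (t : ℕ) : α :=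
  if t < T then f t (backwardSeq f T c (t + 1)) else c
termination_by T - t

theorem backwardSeq_of_lt {c : α} {t : ℕ} (ht : t < T) :
    backwardSeq f T c t = f t (backwardSeq f T c (t + 1)) := by
  rw [backwardSeq, if_pos ht]

theorem backwardSeq_of_le {c : α} {t : ℕ} (ht : T ≤ t) : backwardSeq f T c t = c := by
  rw [backwardSeq, if_neg (not_lt.2 ht)]

theorem isBackwardOrbit_backwardSeq {c : α} (hc : ∀ t, T ≤ t → f t c = c) :
    IsBackwardOrbit f (backwardSeq f T c) := by
  intro t
  rcases lt_or_ge t T with ht | ht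
  · exact backwardSeq_of_lt ht
  · rw [backwardSeq_of_le ht, backwardSeq_of_le (ht.trans t.le_succ), hc t ht]

namespace IsBackwardOrbit

theorem apply_le_of_apply_le [Preorder α] (hf : ∀ t, Monotone (f t))
    (hx : IsBackwardOrbit f x) (hy : IsBackwardOrbit f y) {j t : ℕ} (h : x t ≤ y t)
    (hj : j ≤ t) : x j ≤ y j := by
  induction hj using Nat.decreasingInduction with
  | self => exact h
  | of_succ k _ ih => rw [hx k, hy k]; exact hf k ih

theorem apply_eq_of_apply_eq (hx : IsBackwardOrbit f x) (hy : IsBackwardOrbit f y) {j t : ℕ}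
    (h : x t = y t) (hj : j ≤ t) : x j = y j := by
  induction hj using Nat.decreasingInduction with
  | self => exact h
  | of_succ k _ ih => rw [hx k, hy k, ih]

theorem apply_eq_apply_of_le (hid : ∀ t, T ≤ t → ∀ a, f t a = a) (hx : IsBackwardOrbit f x)
    {t : ℕ} (ht : T ≤ t) : x t = x T := by
  induction t, ht using Nat.le_induction with
  | base => rfl
  | succ k hk ih => rw [← ih, hx k, hid k hk]

theorem eq_backwardSeq (hid : ∀ t, T ≤ t → ∀ a, f t a = a) (hx : IsBackwardOrbit f x) :
    x = backwardSeq f T (x T) := by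
  have hy := isBackwardOrbit_backwardSeq fun t ht => hid t ht (x T)
  funext t
  refine hx.apply_eq_of_apply_eq hy ?_ (le_max_left t T)
  rw [hx.apply_eq_apply_of_le hid (le_max_right t T), backwardSeq_of_le (le_max_right t T)]

theorem exists_eq_before_lt_after [PartialOrder α] (hf : ∀ t, Monotone (f t))
    (hx : IsBackwardOrbit f x) (hy : IsBackwardOrbit f y) (hT : ∀ t, T ≤ t → x t < y t) :
    ∃ T', (∀ j, j < T' → x j = y j) ∧ ∀ t, T' ≤ t → x t < y t := by
  classical
  have hdiff : ∃ t, x t ≠ y t := ⟨T, (hT T le_rfl).ne⟩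
  refine ⟨Nat.find hdiff, fun j hj => not_not.1 (Nat.find_min hdiff hj), fun t ht => ?_⟩
  have hle : x t ≤ y t := by
    rcases le_total t T with htT | hTt
    · exact hx.apply_le_of_apply_le hf hy (hT T le_rfl).le htT
    · exact (hT t hTt).le
  exact hle.lt_of_ne fun heq => Nat.find_spec hdiff (hx.apply_eq_of_apply_eq hy heq ht)

end IsBackwardOrbit

end BackwardOrbit

section SuAutomaton

variable {A : Type} (ψ φ : A → Bool)

def suPred (σ : A) (s' : Fin 2) : Fin 2 :=
  if ψ σ = true ∨ (φ σ = true ∧ s' = 1) then 1 else 0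

variable {ψ φ}

theorem suR_iff_eq_suPred {s s' : Fin 2} {σ : A} :
    suR ψ φ s σ s' ↔ s = suPred ψ φ σ s' := by
  unfold suR suPred
  grind

theorem isSuRun_iff {w : ℕ → A} {β : ℕ → Fin 2} :
    IsSuRun ψ φ w β ↔ IsBackwardOrbit (fun t => suPred ψ φ (w t)) β :=
  forall_congr' fun _ => suR_iff_eq_suPred

theorem suPred_monotone (σ : A) : Monotone (suPred ψ φ σ) := by
  intro a b hab
  unfold suPred
  grind

theorem suPred_eq_self {σ : A} (hφ : φ σ = true) (hψ : ψ σ = false) (s' : Fin 2) :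
    suPred ψ φ σ s' = s' := by
  unfold suPred
  grind

end SuAutomaton

theorem suAutomaton_two_runs_general {A : Type} (ψ φ : A → Bool) (w : ℕ → A)
    (h : ∃ T, ∀ t, T ≤ t → φ (w t) = true ∧ ψ (w t) = false) :
    ∃ β₁ β₂ : ℕ → Fin 2,
      IsSuRun ψ φ w β₁ ∧ IsSuRun ψ φ w β₂ ∧ β₁ ≠ β₂ ∧
      (∀ β : ℕ → Fin 2, IsSuRun ψ φ w β → β = β₁ ∨ β = β₂) ∧
      ∃ T' : ℕ, (∀ j, j < T' → β₁ j = β₂ j) ∧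
        ∀ t, T' ≤ t → β₁ t = 1 ∧ β₂ t = 0 := by
  obtain ⟨T, hT⟩ := h
  set f := fun t => suPred ψ φ (w t)
  have hid : ∀ t, T ≤ t → ∀ a, f t a = a := fun t ht => suPred_eq_self (hT t ht).1 (hT t ht).2
  have hrun₁ := isBackwardOrbit_backwardSeq (f := f) fun t ht => hid t ht 1
  have hrun₂ := isBackwardOrbit_backwardSeq (f := f) fun t ht => hid t ht 0
  refine ⟨backwardSeq f T 1, backwardSeq f T 0, isSuRun_iff.2 hrun₁, isSuRun_iff.2 hrun₂,
    fun heq => by simpa [backwardSeq_of_le] using congrFun heq T, fun β hβ => ?_, ?_⟩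
  · rw [(isSuRun_iff.1 hβ).eq_backwardSeq hid]
    obtain hβT | hβT : β T = 0 ∨ β T = 1 := by omega
    exacts [.inr (by rw [hβT]), .inl (by rw [hβT])]
  · have hend : ∀ t, T ≤ t → backwardSeq f T 0 t < backwardSeq f T 1 t := fun t ht => by
      simp [backwardSeq_of_le ht]
    obtain ⟨T', hagree, hlt⟩ :=
      hrun₂.exists_eq_before_lt_after (fun t => suPred_monotone _) hrun₁ hend
    exact ⟨T', fun j hj => (hagree j hj).symm, fun t ht => by have := hlt t ht; omega⟩

/-- if from some point `T` on every position satisfies `φ ∧ ¬ψ`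
(equivalently, only finitely many positions satisfy `¬φ ∨ ψ`), then the word has
exactly two infinite runs through the SU-automaton, and they share a common
finite prefix and then stay forever in states `1` and `0`, respectively. -/
theorem suAutomaton_two_runs {A : Type} (ψ φ : A → Bool) (w : ℕ → A)
    (h : ∃ T, ∀ t, T ≤ t → φ (w t) = true ∧ ψ (w t) = false)
    (hfin : {t | ¬(φ (w t) = true) ∨ ψ (w t) = true}.Finite) :
    ∃ β₁ β₂ : ℕ → Fin 2,
      IsSuRun ψ φ w β₁ ∧ IsSuRun ψ φ w β₂ ∧ β₁ ≠ β₂ ∧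
      (∀ β : ℕ → Fin 2, IsSuRun ψ φ w β → β = β₁ ∨ β = β₂) ∧
      ∃ T' : ℕ, (∀ j, j < T' → β₁ j = β₂ j) ∧
        ∀ t, T' ≤ t → β₁ t = 1 ∧ β₂ t = 0 :=
  suAutomaton_two_runs_general ψ φ w h
end

section
/- Let β be any infinite run of an infinite word w through the SU-automaton and let t ∈ ℕ. Then: (a) if there exists k ≥ t with ψ(w_k) = true and φ(w_j) = true for all j with t ≤ j < k, then β_t = 1; and (b) if β_t = 1 and there exists some k ≥ t with ψ(w_k) = true or φ(w_k) = false, then there exists k ≥ t with ψ(w_k) = true and φ(w_j) = true for all j with t ≤ j < k (i.e., state 1 at position t correctly witnesses the strong-until property, unless φ ∧ ¬ψ holds forever from t on). -/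
lemma su_aux {A : Type} (ψ φ : A → Bool) (w : ℕ → A)
    (β : ℕ → Fin 2) (hβ : IsSuRun ψ φ w β) :
    ∀ d t, ψ (w (t + d)) = true → (∀ j, t ≤ j → j < t + d → φ (w j) = true) →
      β t = 1 := by
  intro d
  induction d with
  | zero =>
    intro t hψ _
    exact (hβ t).mpr (Or.inl (by simpa using hψ))
  | succ n ih =>
    intro t hψ hφ
    refine (hβ t).mpr (Or.inr ⟨hφ t le_rfl (by omega), ?_⟩)
    exact ih (t + 1) (by rw [show t + 1 + n = t + (n + 1) by omega]; exact hψ)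
      (fun j hj hj' => hφ j (by omega) (by omega))

/-- along any run `β` of `w` through the SU-automaton and any `t`:
(a) if the strong-until property holds at `t`, then `β t = 1`; and
(b) if `β t = 1` and `φ ∧ ¬ψ` does not hold forever from `t` on, then the
strong-until property holds at `t`. -/
theorem suAutomaton_state_correct {A : Type} (ψ φ : A → Bool) (w : ℕ → A)
    (β : ℕ → Fin 2) (hβ : IsSuRun ψ φ w β) (t : ℕ) :
    ((∃ k, t ≤ k ∧ ψ (w k) = true ∧ ∀ j, t ≤ j → j < k → φ (w j) = true) →
        β t = 1) ∧
    (β t = 1 → (∃ k, t ≤ k ∧ (ψ (w k) = true ∨ φ (w k) = false)) →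
        ∃ k, t ≤ k ∧ ψ (w k) = true ∧ ∀ j, t ≤ j → j < k → φ (w j) = true) := by
  constructor
  · rintro ⟨k, hk, hψ, hφ⟩
    exact su_aux ψ φ w β hβ (k - t) t (by rw [show t + (k - t) = k by omega]; exact hψ)
      (fun j hj hj' => hφ j hj (by omega))
  · intro h1 hex
    have hP : ∃ k, t ≤ k ∧ (ψ (w k) = true ∨ φ (w k) = false) := hex
    classical
    let k := Nat.find hP
    have hk := Nat.find_spec hP
    have hmin : ∀ m < k, ¬(t ≤ m ∧ (ψ (w m) = true ∨ φ (w m) = false)) :=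
      fun m hm => Nat.find_min hP hm
    -- for j in [t, k): φ true and ψ false
    have hmid : ∀ j, t ≤ j → j < k → φ (w j) = true ∧ ψ (w j) = false := by
      intro j hj hj'
      have := hmin j hj'
      push_neg at this
      have h2 := this hj
      exact ⟨by simpa using h2.2, by simpa using h2.1⟩
    -- β stays 1 from t up to k
    have hone : ∀ j, t ≤ j → j ≤ k → β j = 1 := by
      intro j hj hj'
      induction j with
      | zero =>
        have : t = 0 := by omega
        rw [← this]; exact h1
      | succ n ih =>
        rcases Nat.lt_or_ge n t with hn | hn
        · -- t = n+1
          have : t = n + 1 := by omega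
          rw [← this]; exact h1
        · have hβn : β n = 1 := ih hn (by omega)
          rcases (hβ n).mp hβn with hψ | ⟨_, hnext⟩
          · exact absurd hψ (by simp [(hmid n hn (by omega)).2])
          · exact hnext
    have hβk : β k = 1 := hone k hk.1 le_rfl
    rcases (hβ k).mp hβk with hψ | ⟨hφk, _⟩
    · exact ⟨k, hk.1, hψ, fun j hj hj' => (hmid j hj hj').1⟩
    · rcases hk.2 with hψ | hφf
      · exact ⟨k, hk.1, hψ, fun j hj hj' => (hmid j hj hj').1⟩
      · rw [hφk] at hφf; exact absurd hφf (by simp)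
end

section
/- For all predicates A, B : ℕ → Prop: (for all t there exists s ≥ t such that WU(s)) holds if and only if ((for all t there exists s ≥ t such that SU(s)) or (there exists t such that for all s ≥ t, WU(s))). In LTL notation: G F (A U B-style weak until) is equivalent to G F (strong until) ∨ F G (weak until), i.e., GF(a U b) ≡ GF(a SU b) ∨ FG(a U b). -/
/-- Strong until: `SU A B t` holds iff there is `k ≥ t` with `A k` and `B j`
for all `t ≤ j < k`. -/
def SU (A B : ℕ → Prop) (t : ℕ) : Prop :=
  ∃ k, t ≤ k ∧ A k ∧ ∀ j, t ≤ j → j < k → B j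

/-- Weak until: `WU A B t := SU A B t ∨ (∀ j ≥ t, B j)`. -/
def WU (A B : ℕ → Prop) (t : ℕ) : Prop :=
  SU A B t ∨ ∀ j, t ≤ j → B j

/-- `GF (a U b) ≡ GF (a SU b) ∨ FG (a U b)`. -/
theorem gf_weakUntil_iff_gf_strongUntil_or_fg_weakUntil (A B : ℕ → Prop) :
    (∀ t, ∃ s, t ≤ s ∧ WU A B s) ↔
      ((∀ t, ∃ s, t ≤ s ∧ SU A B s) ∨ (∃ t, ∀ s, t ≤ s → WU A B s)) := by
  constructor
  · intro h
    by_cases hsu : ∀ t, ∃ s, t ≤ s ∧ SU A B s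
    · exact Or.inl hsu
    · right
      push_neg at hsu
      obtain ⟨t, ht⟩ := hsu
      obtain ⟨s, hts, hwu⟩ := h t
      cases hwu with
      | inl hs => exact absurd hs (ht s hts)
      | inr hb =>
        exact ⟨s, fun s' hs' => Or.inr fun j hj => hb j (hs'.trans hj)⟩
  · rintro (h | ⟨t, ht⟩)
    · intro t
      obtain ⟨s, hts, hs⟩ := h t
      exact ⟨s, hts, Or.inl hs⟩
    · intro u
      exact ⟨max t u, le_max_right _ _, ht _ (le_max_left _ _)⟩
end

section
/- For every nondeterministic ω-automaton A = (S, I, R) over alphabet Σ with n states and a co-Büchi acceptance condition given by F ⊆ S, there exists a deterministic ω-automaton with a co-Büchi acceptance condition, with at most 3^n states, that accepts exactly the same language (the Miyano–Hayashi breakpoint construction suffices to determinize co-Büchi automata). -/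
/-- `IsRun I R w β`: `β` is a run of the infinite word `w` through the
ω-automaton with initial states `I` and transition relation `R`. -/
def IsRun {S A : Type} (I : Set S) (R : S → A → S → Prop) (w : ℕ → A) (β : ℕ → S) : Prop :=
  β 0 ∈ I ∧ ∀ t, R (β t) (w t) (β (t + 1))

/-- The unique run of a deterministic automaton with transition function `δ`
and initial state `s0` on the infinite word `w`. -/
def detRun {S A : Type} (δ : S → A → S) (s0 : S) (w : ℕ → A) : ℕ → S
  | 0 => s0
  | t + 1 => δ (detRun δ s0 w t) (w t)

/-!
Miyano–Hayashi breakpoint construction. The deterministic automaton tracks a pair `(Q, O)` with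
`O ⊆ Q`: `Q` is the subset construction, and `O` holds the states reached by paths that have stayed
in `F` since the last breakpoint, i.e. the last time `O` was empty, when `O` restarts from the
successors of `Q` inside `F`. Colouring each state by "outside `Q`", "in `Q \ O`" or "in `O`"
bounds the number of such pairs by `3 ^ n`.

If some run stays in `F` from time `N` on, then after the first breakpoint past `N` this run is
tracked by `O` forever, so `O` is eventually nonempty. Conversely, if `O` is nonempty from time
`N` on, every state in a later `O` is reached through the earlier `O`s, hence through `F`, and
Kőnig's lemma glues these arbitrarily long paths, prefixed by paths through the `Q`s, into a single
run that stays in `F` after time `N`.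
-/

open Set Filter Function

section Konig

variable {S : Type} {L : ℕ → Set S} {E : ℕ → S → S → Prop}

def LayeredPath (L : ℕ → Set S) (E : ℕ → S → S → Prop) (t : ℕ) : Type :=
  {p : Fin (t + 1) → S // (∀ k : Fin (t + 1), p k ∈ L k) ∧
    ∀ k : Fin t, E k (p k.castSucc) (p k.succ)}

namespace LayeredPath

def restrict {i j : ℕ} (hij : i ≤ j) (p : LayeredPath L E j) : LayeredPath L E i :=
  ⟨fun k => p.1 (Fin.castLE (by omega) k), fun k => p.2.1 (Fin.castLE (by omega) k),
    fun k => p.2.2 (Fin.castLE hij k)⟩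

theorem exists_last_eq (hpred : ∀ t, ∀ s' ∈ L (t + 1), ∃ s ∈ L t, E t s s') :
    ∀ t, ∀ s ∈ L t, ∃ p : LayeredPath L E t, p.1 (Fin.last t) = s
  | 0, s, hs => ⟨⟨fun _ => s, fun k => by rwa [Fin.fin_one_eq_zero k], fun k => k.elim0⟩, rfl⟩
  | t + 1, s', hs' => by
    obtain ⟨s, hs, hE⟩ := hpred t s' hs'
    obtain ⟨⟨p, hpL, hpE⟩, rfl⟩ := exists_last_eq hpred t s hs
    refine ⟨⟨Fin.snoc p s', fun k => ?_, fun k => ?_⟩, Fin.snoc_last (α := fun _ => S) _ _⟩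
    · induction k using Fin.lastCases with
      | last => simpa using hs'
      | cast k => simpa using hpL k
    · induction k using Fin.lastCases with
      | last => simpa [Fin.succ_last] using hE
      | cast k =>
        rw [Fin.succ_castSucc, Fin.snoc_castSucc, Fin.snoc_castSucc]
        exact hpE k

end LayeredPath

theorem exists_path_of_frequently_nonempty [Finite S] (hne : ∃ᶠ t in atTop, (L t).Nonempty)
    (hpred : ∀ t, ∀ s' ∈ L (t + 1), ∃ s ∈ L t, E t s s') :
    ∃ γ : ℕ → S, ∀ t, γ t ∈ L t ∧ E t (γ t) (γ (t + 1)) := by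
  have : ∀ t, Nonempty (LayeredPath L E t) := fun t => by
    obtain ⟨t', htt', s, hs⟩ := frequently_atTop.mp hne t
    obtain ⟨p, -⟩ := LayeredPath.exists_last_eq hpred t' s hs
    exact ⟨p.restrict htt'⟩
  have : ∀ t, Finite (LayeredPath L E t) := fun t => Subtype.finite
  obtain ⟨f, hf⟩ := exists_seq_forall_proj_of_forall_finite (α := LayeredPath L E)
    (fun hij p => p.restrict hij) (fun _ _ => rfl) (by intros; rfl)
    (fun _ _ => Set.toFinite _)
  refine ⟨fun t => (f t).1 (Fin.last t), fun t => ⟨(f t).2.1 (Fin.last t), ?_⟩⟩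
  have hlast : (f (t + 1)).1 (Fin.last t).castSucc = (f t).1 (Fin.last t) :=
    congrArg (fun p : LayeredPath L E t => p.1 (Fin.last t)) (hf (Nat.le_succ t))
  have hE := (f (t + 1)).2.2 (Fin.last t)
  rwa [hlast, Fin.succ_last] at hE

end Konig

namespace MiyanoHayashi

variable {S A : Type}

def post (R : S → A → S → Prop) (X : Set S) (a : A) : Set S := {s' | ∃ s ∈ X, R s a s'}

theorem post_mono {R : S → A → S → Prop} {X Y : Set S} (h : X ⊆ Y) (a : A) :
    post R X a ⊆ post R Y a :=
  fun _ ⟨s, hs, hR⟩ => ⟨s, h hs, hR⟩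

open Classical in
def step (R : S → A → S → Prop) (F : Set S) (p : Set S × Set S) (a : A) : Set S × Set S :=
  (post R p.1 a, post R (if p.2 = ∅ then p.1 else p.2) a ∩ F)

theorem step_snd_subset_fst {R : S → A → S → Prop} {F : Set S} {p : Set S × Set S}
    (h : p.2 ⊆ p.1) (a : A) : (step R F p a).2 ⊆ (step R F p a).1 := by
  refine inter_subset_left.trans (post_mono ?_ a)
  split_ifs
  exacts [subset_rfl, h]

def State (S : Type) : Type := {p : Set S × Set S // p.2 ⊆ p.1}

instance [Finite S] : Finite (State S) := Subtype.finite

open Classical in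
noncomputable def coloring (p : State S) (s : S) : Fin 3 :=
  if s ∈ p.1.2 then 2 else if s ∈ p.1.1 then 1 else 0

theorem coloring_injective : Injective (coloring (S := S)) := by
  intro p q h
  refine Subtype.ext (Prod.ext (Set.ext fun s => ?_) (Set.ext fun s => ?_)) <;>
  · have hs := congrFun h s
    have hp := @p.2 s
    have hq := @q.2 s
    simp only [coloring] at hs
    split_ifs at hs <;> simp_all

theorem card_state_le [Fintype S] [Fintype (State S)] :
    Fintype.card (State S) ≤ 3 ^ Fintype.card S := by
  classical
  simpa using Fintype.card_le_of_injective (coloring (S := S)) coloring_injective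

section Run

variable (I : Set S) (R : S → A → S → Prop) (F : Set S) (w : ℕ → A)

abbrev run : ℕ → Set S × Set S := detRun (step R F) (I, ∅) w

theorem run_snd_subset_fst : ∀ t, (run I R F w t).2 ⊆ (run I R F w t).1
  | 0 => empty_subset _
  | t + 1 => step_snd_subset_fst (run_snd_subset_fst t) _

def State.init : State S := ⟨(I, ∅), empty_subset _⟩

def State.step (p : State S) (a : A) : State S := ⟨MiyanoHayashi.step R F p.1 a, step_snd_subset_fst p.2 a⟩

theorem State.val_detRun : ∀ t, (detRun (State.step R F) (State.init I) w t).1 = run I R F w t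
  | 0 => rfl
  | t + 1 => congrArg (MiyanoHayashi.step R F · (w t)) (State.val_detRun t)

variable {I R F w}

theorem mem_run_fst {β : ℕ → S} (hβ : IsRun I R w β) : ∀ t, β t ∈ (run I R F w t).1
  | 0 => hβ.1
  | t + 1 => ⟨β t, mem_run_fst hβ t, hβ.2 t⟩

theorem mem_run_snd_succ {β : ℕ → S} (hβ : IsRun I R w β) {t : ℕ} (hF : β (t + 1) ∈ F)
    (h : (run I R F w t).2 = ∅ ∨ β t ∈ (run I R F w t).2) :
    β (t + 1) ∈ (run I R F w (t + 1)).2 := by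
  refine ⟨⟨β t, ?_, hβ.2 t⟩, hF⟩
  split_ifs with hO
  · exact mem_run_fst hβ t
  · exact h.resolve_left hO

theorem exists_snd_nonempty_of_isRun {β : ℕ → S} (hβ : IsRun I R w β) {N : ℕ}
    (hN : ∀ t, N ≤ t → β t ∈ F) : ∃ M, ∀ t, M ≤ t → (run I R F w t).2.Nonempty := by
  by_cases h : ∃ t₀, N ≤ t₀ ∧ (run I R F w t₀).2 = ∅
  · obtain ⟨t₀, hNt₀, ht₀⟩ := h
    have hmem : ∀ t, t₀ + 1 ≤ t → β t ∈ (run I R F w t).2 := by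
      intro t ht
      induction t, ht using Nat.le_induction with
      | base => exact mem_run_snd_succ hβ (hN _ (by omega)) (Or.inl ht₀)
      | succ t ht ih => exact mem_run_snd_succ hβ (hN _ (by omega)) (Or.inr ih)
    exact ⟨t₀ + 1, fun t ht => ⟨β t, hmem t ht⟩⟩
  · push Not at h
    exact ⟨N, h⟩

theorem exists_isRun_of_snd_nonempty [Finite S] {N : ℕ}
    (hN : ∀ t, N ≤ t → (run I R F w t).2.Nonempty) :
    ∃ β, IsRun I R w β ∧ ∃ M, ∀ t, M ≤ t → β t ∈ F := by
  set L : ℕ → Set S := fun t => if N < t then (run I R F w t).2 else (run I R F w t).1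
  have hL : ∀ t, L t ⊆ (run I R F w t).1 := fun t => by
    simp only [L]
    split_ifs
    exacts [run_snd_subset_fst I R F w t, subset_rfl]
  have hpred : ∀ t, ∀ s' ∈ L (t + 1), ∃ s ∈ L t, R s (w t) s' := by
    intro t s' hs'
    by_cases ht : N < t
    · have hO : (run I R F w t).2 ≠ ∅ := (hN t ht.le).ne_empty
      simp only [L, if_pos ht, if_pos (Nat.lt_succ_of_lt ht)] at hs' ⊢
      have hs' : s' ∈ post R (if (run I R F w t).2 = ∅ then _ else _) (w t) := hs'.1
      rwa [if_neg hO] at hs'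
    · simp only [L, if_neg ht]
      exact hL (t + 1) hs'
  have hne : ∃ᶠ t in atTop, (L t).Nonempty := frequently_atTop.2 fun t =>
    ⟨max t N + 1, by omega, by simpa [L] using hN _ (by omega)⟩
  obtain ⟨γ, hγ⟩ := exists_path_of_frequently_nonempty hne hpred
  refine ⟨γ, ⟨(hγ 0).1, fun t => (hγ t).2⟩, N + 1, fun t ht => ?_⟩
  have hγO : γ t ∈ (run I R F w t).2 := by simpa [L, show N < t by omega] using (hγ t).1
  cases t with
  | zero => omega
  | succ t => exact hγO.2

theorem eventually_snd_nonempty_iff [Finite S] :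
    (∃ N, ∀ t, N ≤ t → (run I R F w t).2.Nonempty) ↔
      ∃ β, IsRun I R w β ∧ ∃ N, ∀ t, N ≤ t → β t ∈ F :=
  ⟨fun ⟨_, hN⟩ => exists_isRun_of_snd_nonempty hN,
    fun ⟨_, hβ, _, hN⟩ => exists_snd_nonempty_of_isRun hβ hN⟩

end Run

end MiyanoHayashi

/-- every nondeterministic co-Büchi automaton `(S, I, R)` with `n`
states and acceptance set `F` has an equivalent deterministic co-Büchi automaton
with at most `3 ^ n` states (Miyano–Hayashi breakpoint construction). -/
theorem cobuechi_determinization_breakpoint_construction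
    {S A : Type} [Fintype S] (I : Set S) (R : S → A → S → Prop) (F : Set S) :
    ∃ (S' : Type) (_ : Fintype S') (s0 : S') (δ : S' → A → S') (F' : Set S'),
      Fintype.card S' ≤ 3 ^ Fintype.card S ∧
      ∀ w : ℕ → A,
        ((∃ N, ∀ t, N ≤ t → detRun δ s0 w t ∈ F') ↔
          ∃ β, IsRun I R w β ∧ ∃ N, ∀ t, N ≤ t → β t ∈ F) := by
  open MiyanoHayashi in
  let _ : Fintype (State S) := Fintype.ofFinite _
  exact ⟨State S, inferInstance, State.init I, State.step R F, {p | p.1.2.Nonempty},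
    card_state_le, fun w => by
      simpa only [mem_ofPred_eq, State.val_detRun] using eventually_snd_nonempty_iff⟩
end
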